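/- arXiv:1202.6263 — 6 statements merged into one kernel-verified Lean document; each statement's English description precedes it below -/
import Mathlib

section
/- Let p̃ be a probability mass function on ℕ with finite support. There exists a unique p̂ ∈ 𝒞 such that Q(p̂) = inf_{p ∈ 𝒞} Q(p) = inf_{p ∈ 𝒦, ∑p(i)²<∞} Q(p). Moreover, the support of p̂ is finite, and the maximum ŝ of the support of p̂ satisfies ŝ ≥ s̃, where s̃ is the maximum of the support of p̃. -/
open scoped BigOperators

noncomputable section

/-- A discrete function `f : ℕ → ℝ` is convex if
`f(i+1) - 2 f(i) + f(i-1) ≥ 0` for every `i ≥ 1`. -/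
def ConvexNat (f : ℕ → ℝ) : Prop :=
  ∀ i : ℕ, 0 ≤ f (i + 2) - 2 * f (i + 1) + f i

/-- `𝒦`: convex, nonnegative functions on `ℕ` tending to `0` at infinity. -/
def MemK (f : ℕ → ℝ) : Prop :=
  ConvexNat f ∧ (∀ i, 0 ≤ f i) ∧ Filter.Tendsto f Filter.atTop (nhds 0)

/-- `𝒞`: elements of `𝒦` summing to one. -/
def MemC (f : ℕ → ℝ) : Prop := MemK f ∧ ∑' i, f i = 1

/-- The least squares criterion `Q(f) = (1/2) ∑ f(i)² − ∑ f(i) p̃(i)`. -/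
def Crit (ptil f : ℕ → ℝ) : ℝ :=
  (1 / 2) * ∑' i, (f i) ^ 2 - ∑' i, f i * ptil i

/-- A probability mass function on `ℕ` with finite support. -/
def IsFinPMF (p : ℕ → ℝ) : Prop :=
  (∀ i, 0 ≤ p i) ∧ (Function.support p).Finite ∧ ∑' i, p i = 1

/-- `s` is the maximum of the support of `p`. -/
def IsMaxSupport (p : ℕ → ℝ) (s : ℕ) : Prop :=
  p s ≠ 0 ∧ ∀ i, p i ≠ 0 → i ≤ s

/-!
Since `Crit p̃ f = (‖p̃ - f‖² - ‖p̃‖²) / 2`, minimising `Crit p̃` over the square-summable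
elements of `𝒦` means projecting `p̃` onto the closed convex set `𝒦 ∩ ℓ²` of the Hilbert space
`ℓ²`; this gives existence and uniqueness of `p̂`. Testing the variational inequality of the
projection against the tents `(n + 1 - i)⁺` (adding one, or removing the kink of `p̂` at `n + 1`)
shows that the iterated partial sums `Γ n` of `p̂ - p̃` are nonnegative and vanish at every knot
of `p̂` (a point of positive second difference). Beyond `s̃` the partial sums of `p̂ - p̃` increase, so `p̂` has only finitely many knots
and hence finite support. Then `Γ ≥ 0` forces `∑ p̂ ≥ 1`, while `Γ = 0` at the last knot `ŝ`
forces `∑_{i ≤ ŝ} p̂ ≤ ∑_{i ≤ ŝ} p̃ ≤ 1`, strictly if `ŝ < s̃`. So `p̂ ∈ 𝒞`, and it also minimises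
over `𝒞 ⊆ ℓ²`.
-/

open Finset Filter Topology
open scoped InnerProductSpace

theorem eventually_eq_zero_of_succ_eq {a : ℕ → ℝ} {N : ℕ} (h : ∀ n ≥ N, a (n + 1) = a n)
    (ha : Tendsto a atTop (𝓝 0)) : ∀ n ≥ N, a n = 0 := by
  have hconst : ∀ n ≥ N, a n = a N := fun n hn => by
    induction n, hn using Nat.le_induction with
    | base => rfl
    | succ n hn ih => rw [h n hn, ih]
  have hN : a N = 0 := tendsto_nhds_unique (tendsto_atTop_of_eventually_const hconst) ha
  exact fun n hn => (hconst n hn).trans hN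

theorem ConvexNat.antitone_sub_succ {v : ℕ → ℝ} (hv : ConvexNat v) :
    Antitone fun i => v i - v (i + 1) :=
  antitone_nat_of_succ_le fun i => by linarith [hv i]

/-- With truncated subtraction this is `(n + 1 - i)⁺`, whose only kink is at `n + 1`. -/
def tent (n i : ℕ) : ℝ := ((n + 1 - i : ℕ) : ℝ)

theorem tent_secondDiff (n i : ℕ) :
    tent n (i + 2) - 2 * tent n (i + 1) + tent n i = if i = n then 1 else 0 := by
  simp only [tent]
  rcases lt_trichotomy i n with h | rfl | h
  · rw [show n + 1 - i = (n + 1 - (i + 2)) + 2 by omega,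
      show n + 1 - (i + 1) = (n + 1 - (i + 2)) + 1 by omega, if_neg h.ne]
    push_cast; ring
  · simp
  · rw [Nat.sub_eq_zero_of_le (by omega : n + 1 ≤ i),
      Nat.sub_eq_zero_of_le (by omega : n + 1 ≤ i + 1),
      Nat.sub_eq_zero_of_le (by omega : n + 1 ≤ i + 2), if_neg h.ne']
    simp

theorem tent_nonneg (n i : ℕ) : 0 ≤ tent n i := Nat.cast_nonneg _

theorem convexNat_tent (n : ℕ) : ConvexNat (tent n) := fun i => by
  rw [tent_secondDiff]
  split_ifs <;> norm_num

theorem tent_eq_zero {n i : ℕ} (h : n < i) : tent n i = 0 := by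
  simp [tent, Nat.sub_eq_zero_of_le (h : n + 1 ≤ i)]

namespace MemK

variable {v : ℕ → ℝ}

theorem tendsto_sub_succ (hv : MemK v) : Tendsto (fun i => v i - v (i + 1)) atTop (𝓝 0) := by
  simpa using hv.2.2.sub (hv.2.2.comp (tendsto_add_atTop_nat 1))

theorem sub_succ_nonneg (hv : MemK v) (i : ℕ) : 0 ≤ v i - v (i + 1) :=
  le_of_tendsto hv.tendsto_sub_succ
    (eventually_atTop.2 ⟨i, fun _ hj => hv.1.antitone_sub_succ hj⟩)

theorem antitone (hv : MemK v) : Antitone v :=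
  antitone_nat_of_succ_le fun i => by linarith [hv.sub_succ_nonneg i]

theorem secondDiff_le (hv : MemK v) (n : ℕ) :
    v (n + 2) - 2 * v (n + 1) + v n ≤ v n - v (n + 1) := by
  linarith [hv.sub_succ_nonneg (n + 1)]

/-- Before `n` the slopes of `v` are at least `v n - v (n + 1)`. -/
theorem tent_mul_le (hv : MemK v) (n i : ℕ) : tent n i * (v n - v (n + 1)) ≤ v i := by
  rcases le_or_gt i (n + 1) with hi | hi
  · have htele : ∑ j ∈ Ico i (n + 1), (v j - v (j + 1)) = v i - v (n + 1) := by
      have := Finset.sum_Ico_sub (fun j => -v j) hi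
      simp only [neg_sub_neg] at this
      linarith
    have hcard :
        (Ico i (n + 1)).card • (v n - v (n + 1)) ≤ ∑ j ∈ Ico i (n + 1), (v j - v (j + 1)) :=
      card_nsmul_le_sum _ _ _ fun j hj => hv.1.antitone_sub_succ (by simp at hj; omega)
    rw [nsmul_eq_mul, Nat.card_Ico, htele] at hcard
    rw [tent]
    linarith [hv.2.1 (n + 1)]
  · rw [tent_eq_zero (by omega), zero_mul]
    exact hv.2.1 i

theorem eventually_eq_zero (hv : MemK v) {N : ℕ}
    (hN : ∀ n ≥ N, v (n + 2) - 2 * v (n + 1) + v n = 0) : ∀ n ≥ N, v n = 0 := by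
  have hslope :=
    eventually_eq_zero_of_succ_eq (fun n hn => by linarith [hN n hn]) hv.tendsto_sub_succ
  exact eventually_eq_zero_of_succ_eq (fun n hn => by linarith [hslope n hn]) hv.2.2

end MemK

theorem MemC.summable_sq {p : ℕ → ℝ} (hp : MemC p) : Summable fun i => p i ^ 2 := by
  have hsum : Summable p := by
    by_contra h
    have := hp.2
    rw [tsum_eq_zero_of_not_summable h] at this
    norm_num at this
  refine Summable.of_nonneg_of_le (fun i => sq_nonneg _) (fun i => ?_) (hsum.mul_left (p 0))
  rw [sq]
  exact mul_le_mul_of_nonneg_right (hp.1.antitone (Nat.zero_le i)) (hp.1.2.1 i)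

def cumsum (x : ℕ → ℝ) (n : ℕ) : ℝ := ∑ i ∈ range (n + 1), x i

section cumsum

variable {x : ℕ → ℝ}

theorem cumsum_zero (x : ℕ → ℝ) : cumsum x 0 = x 0 := by simp [cumsum]

theorem cumsum_succ (x : ℕ → ℝ) (n : ℕ) : cumsum x (n + 1) = cumsum x n + x (n + 1) :=
  sum_range_succ _ _

theorem cumsum_sub (x y : ℕ → ℝ) (n : ℕ) : cumsum (x - y) n = cumsum x n - cumsum y n :=
  sum_sub_distrib _ _

theorem cumsum_mono (hx : ∀ i, 0 ≤ x i) : Monotone (cumsum x) :=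
  monotone_nat_of_le_succ fun n => by rw [cumsum_succ]; linarith [hx (n + 1)]

theorem cumsum_eq_of_forall_gt_eq_zero {N : ℕ} (hx : ∀ i > N, x i = 0) {n : ℕ} (hn : N ≤ n) :
    cumsum x n = cumsum x N := by
  induction n, hn using Nat.le_induction with
  | base => rfl
  | succ n hn ih => rw [cumsum_succ, ih, hx (n + 1) (by omega), add_zero]

theorem sum_tent_mul (x : ℕ → ℝ) (n : ℕ) :
    ∑ i ∈ range (n + 1), tent n i * x i = cumsum (cumsum x) n := by
  induction n with
  | zero => simp [tent, cumsum]
  | succ n ih =>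
    have htent : ∀ i ∈ range (n + 1), tent (n + 1) i = tent n i + 1 := fun i hi => by
      simp only [tent, mem_range] at hi ⊢
      rw [show n + 1 + 1 - i = (n + 1 - i) + 1 by omega]
      push_cast; ring
    have hlast : tent (n + 1) (n + 1) = 1 := by simp [tent]
    rw [sum_range_succ, sum_congr rfl fun i hi => by rw [htent i hi], hlast, cumsum_succ, ← ih,
      cumsum_succ, cumsum]
    simp only [add_mul, one_mul, sum_add_distrib]
    ring

theorem le_zero_of_cumsum_eq_zero (hx : ∀ n, 0 ≤ cumsum x n) {n : ℕ} (hn : cumsum x n = 0) :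
    x n ≤ 0 := by
  cases n with
  | zero => rw [cumsum_zero] at hn; exact hn.le
  | succ n => linarith [cumsum_succ x n, hx n]

theorem nonneg_of_cumsum_nonneg {N : ℕ} {c : ℝ} (hx : ∀ n, 0 ≤ cumsum x n)
    (hc : ∀ n ≥ N, x n = c) : 0 ≤ c := by
  have hlin : ∀ k : ℕ, cumsum x (N + k) = cumsum x N + k * c := fun k => by
    induction k with
    | zero => simp
    | succ k ih => rw [← add_assoc, cumsum_succ, ih, hc _ (by omega)]; push_cast; ring
  by_contra! hneg
  obtain ⟨k, hk⟩ := exists_nat_gt (cumsum x N / -c)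
  rw [div_lt_iff₀ (by linarith)] at hk
  linarith [hx (N + k), hlin k]

end cumsum

theorem IsMaxSupport.eq_zero_of_lt {p : ℕ → ℝ} {s : ℕ} (h : IsMaxSupport p s) {i : ℕ}
    (hi : s < i) : p i = 0 := by
  by_contra hne
  exact absurd (h.2 i hne) (by omega)

theorem IsMaxSupport.cumsum_lt {p : ℕ → ℝ} {s : ℕ} (hp : ∀ i, 0 ≤ p i) (h : IsMaxSupport p s)
    {n : ℕ} (hn : n < s) : cumsum p n < cumsum p s := by
  obtain ⟨m, rfl⟩ : ∃ m, s = m + 1 := ⟨s - 1, by omega⟩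
  have hpos : 0 < p (m + 1) := lt_of_le_of_ne (hp _) (Ne.symm h.1)
  linarith [cumsum_succ p m, cumsum_mono hp (by omega : n ≤ m)]

theorem IsMaxSupport.support_finite {p : ℕ → ℝ} {s : ℕ} (h : IsMaxSupport p s) :
    (Function.support p).Finite :=
  (Set.finite_Iic s).subset fun i hi => h.2 i hi

theorem IsMaxSupport.tsum_eq_cumsum {p : ℕ → ℝ} {s : ℕ} (h : IsMaxSupport p s) :
    ∑' i, p i = cumsum p s :=
  tsum_eq_sum fun _ hi => h.eq_zero_of_lt (by simpa using hi)

theorem exists_isMaxSupport_of_finite {v : ℕ → ℝ} (hfin : (Function.support v).Finite)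
    (hne : ∃ i, v i ≠ 0) : ∃ s, IsMaxSupport v s := by
  obtain ⟨s, hs, hmax⟩ := Set.exists_max_image _ id hfin hne
  exact ⟨s, hs, hmax⟩

section KnotConditions

variable {p v : ℕ → ℝ} {s : ℕ}

/-- Beyond `s` the partial sums `G = cumsum (v - p)` increase, while at a knot `n` of `v` the
conditions force `G n ≤ 0 ≤ G (n + 1)`; two knots beyond `s` are therefore adjacent, and `v`
vanishes at the second one. -/
theorem knots_bounded (hps : IsMaxSupport p s) (hv : MemK v)
    (hΓ : ∀ n, 0 ≤ cumsum (cumsum (v - p)) n)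
    (hknot : ∀ n, 0 < v (n + 2) - 2 * v (n + 1) + v n → cumsum (cumsum (v - p)) n = 0) :
    ∃ N, ∀ n ≥ N, v (n + 2) - 2 * v (n + 1) + v n = 0 := by
  set G := cumsum (v - p)
  have hG_succ : ∀ m, G (m + 1) = G m + (v (m + 1) - p (m + 1)) := cumsum_succ _
  have hGmono : MonotoneOn G (Set.Ici s) := monotoneOn_nat_Ici_of_le_succ fun m hm => by
    rw [hG_succ, hps.eq_zero_of_lt (by omega : s < m + 1)]
    linarith [hv.2.1 (m + 1)]
  by_cases h : ∃ n₁ ≥ s, 0 < v (n₁ + 2) - 2 * v (n₁ + 1) + v n₁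
  · obtain ⟨n₁, hn₁, hc₁⟩ := h
    refine ⟨n₁ + 2, fun n hn => ?_⟩
    by_contra hne
    have hc : 0 < v (n + 2) - 2 * v (n + 1) + v n := lt_of_le_of_ne (hv.1 n) (Ne.symm hne)
    obtain ⟨m, rfl⟩ : ∃ m, n = m + 1 := ⟨n - 1, by omega⟩
    have h1 : 0 ≤ G (n₁ + 1) := by linarith [cumsum_succ G n₁, hknot n₁ hc₁, hΓ (n₁ + 1)]
    have h2 : G (m + 1) ≤ 0 := le_zero_of_cumsum_eq_zero hΓ (hknot _ hc)
    have h3 : G (n₁ + 1) ≤ G m :=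
      hGmono (Set.mem_Ici.2 (by omega)) (Set.mem_Ici.2 (by omega)) (by omega)
    have h4 := hG_succ m
    rw [hps.eq_zero_of_lt (by omega : s < m + 1)] at h4
    linarith [hv.secondDiff_le (m + 1), hv.2.1 (m + 2)]
  · simp only [not_exists, not_and, not_lt] at h
    exact ⟨s, fun n hn => le_antisymm (h n hn) (hv.1 n)⟩

theorem exists_isMaxSupport_of_knot_conditions (hp : ∀ i, 0 ≤ p i) (hps : IsMaxSupport p s)
    (hp1 : cumsum p s = 1) (hv : MemK v) (hΓ : ∀ n, 0 ≤ cumsum (cumsum (v - p)) n)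
    (hknot : ∀ n, 0 < v (n + 2) - 2 * v (n + 1) + v n → cumsum (cumsum (v - p)) n = 0) :
    ∃ ŝ, IsMaxSupport v ŝ ∧ s ≤ ŝ ∧ cumsum v ŝ = 1 := by
  obtain ⟨N, hN⟩ := knots_bounded hps hv hΓ hknot
  have hvN := hv.eventually_eq_zero hN
  have hpcum : ∀ n ≥ s, cumsum p n = 1 := fun n hn =>
    (cumsum_eq_of_forall_gt_eq_zero (fun _ hi => hps.eq_zero_of_lt hi) hn).trans hp1
  have hvcum : ∀ n ≥ N, cumsum v n = cumsum v N := fun n hn =>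
    cumsum_eq_of_forall_gt_eq_zero (fun i hi => hvN i hi.le) hn
  have hS : 1 ≤ cumsum v N := by
    have := nonneg_of_cumsum_nonneg (N := max N s) (c := cumsum v N - 1) hΓ fun n hn => by
      rw [cumsum_sub, hvcum n (le_of_max_le_left hn), hpcum n (le_of_max_le_right hn)]
    linarith
  obtain ⟨ŝ, hŝ⟩ : ∃ ŝ, IsMaxSupport v ŝ := by
    refine exists_isMaxSupport_of_finite ((Set.finite_Iio N).subset fun i hi => ?_) ?_
    · by_contra h
      exact hi (hvN i (not_lt.1 h))
    · by_contra! h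
      norm_num [cumsum, h] at hS
  have hŝN : ŝ < N := by
    by_contra h
    exact hŝ.1 (hvN ŝ (not_lt.1 h))
  have hknotŝ : 0 < v (ŝ + 2) - 2 * v (ŝ + 1) + v ŝ := by
    rw [hŝ.eq_zero_of_lt (by omega), hŝ.eq_zero_of_lt (by omega)]
    simpa using lt_of_le_of_ne (hv.2.1 ŝ) (Ne.symm hŝ.1)
  have hvŝ : cumsum v ŝ = cumsum v N :=
    (cumsum_eq_of_forall_gt_eq_zero (fun _ hi => hŝ.eq_zero_of_lt hi) hŝN.le).symm
  have hle : cumsum v ŝ ≤ cumsum p ŝ := by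
    have := le_zero_of_cumsum_eq_zero hΓ (hknot ŝ hknotŝ)
    rw [cumsum_sub] at this
    linarith
  have hsŝ : s ≤ ŝ := by
    by_contra! h
    linarith [hps.cumsum_lt hp h]
  exact ⟨ŝ, hŝ, hsŝ, le_antisymm (hle.trans (hpcum ŝ hsŝ).le) (hvŝ ▸ hS)⟩

end KnotConditions

theorem eq_of_norm_sub_le_of_norm_sub_eq_iInf {F : Type*} [NormedAddCommGroup F]
    [InnerProductSpace ℝ F] {K : Set F} (hK : Convex ℝ K) {u v w : F} (hv : v ∈ K) (hw : w ∈ K)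
    (hvmin : ‖u - v‖ = ⨅ x : K, ‖u - x‖) (hwv : ‖u - w‖ ≤ ‖u - v‖) : w = v := by
  have hwmin : ‖u - w‖ = ⨅ x : K, ‖u - x‖ :=
    le_antisymm (hwv.trans hvmin.le)
      (ciInf_le ⟨0, fun _ ⟨_, h⟩ => h ▸ norm_nonneg _⟩ (⟨w, hw⟩ : K))
  have h₁ := (norm_eq_iInf_iff_real_inner_le_zero hK hv).1 hvmin w hw
  have h₂ := (norm_eq_iInf_iff_real_inner_le_zero hK hw).1 hwmin v hv
  have hsum : ⟪u - v, w - v⟫_ℝ + ⟪u - w, v - w⟫_ℝ = ‖w - v‖ ^ 2 := by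
    rw [← real_inner_self_eq_norm_sq, ← neg_sub w v, inner_neg_right, ← sub_eq_add_neg,
      ← inner_sub_left, sub_sub_sub_cancel_left]
  rw [← sub_eq_zero, ← norm_eq_zero]
  nlinarith [norm_nonneg (w - v)]

local notation "ℓ²" => lp (fun _ : ℕ => ℝ) 2

theorem memℓp_two_iff_summable_sq {f : ℕ → ℝ} : Memℓp f 2 ↔ Summable fun i => f i ^ 2 := by
  rw [memℓp_gen_iff (by norm_num)]
  simp

theorem lp.summable_sq (f : ℓ²) : Summable fun i => f i ^ 2 :=
  memℓp_two_iff_summable_sq.1 (lp.memℓp f)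

theorem memℓp_two_of_support_finite {f : ℕ → ℝ} (hf : (Function.support f).Finite) :
    Memℓp f 2 :=
  (memℓp_zero hf).of_exponent_ge (by norm_num)

theorem lp.inner_eq_tsum_mul (f g : ℓ²) : ⟪f, g⟫_ℝ = ∑' i, f i * g i := by
  rw [lp.inner_eq_tsum]
  simp [mul_comm]

theorem crit_eq_norm_sq (u f : ℓ²) : Crit u f = (‖u - f‖ ^ 2 - ‖u‖ ^ 2) / 2 := by
  have hf : ‖f‖ ^ 2 = ∑' i, f i ^ 2 := by
    rw [← real_inner_self_eq_norm_sq, lp.inner_eq_tsum_mul]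
    simp [sq]
  rw [Crit, norm_sub_sq_real, hf, real_inner_comm, lp.inner_eq_tsum_mul]
  ring

theorem crit_le_crit_iff (u f g : ℓ²) : Crit u f ≤ Crit u g ↔ ‖u - f‖ ≤ ‖u - g‖ := by
  rw [crit_eq_norm_sq, crit_eq_norm_sq, ← sq_le_sq₀ (norm_nonneg _) (norm_nonneg _)]
  constructor <;> intro h <;> linarith

/-- `𝒦 ∩ ℓ²`: the decay condition of `𝒦` is automatic in `ℓ²`. -/
def K₂ : Set ℓ² := {f | ConvexNat f ∧ ∀ i, 0 ≤ f i}

theorem memK_of_mem_K₂ {f : ℓ²} (hf : f ∈ K₂) : MemK f := by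
  refine ⟨hf.1, hf.2, ?_⟩
  have hsq : Tendsto (fun i => √(f i ^ 2)) atTop (𝓝 0) := by
    simpa [Function.comp_def] using
      (Real.continuous_sqrt.tendsto 0).comp (lp.summable_sq f).tendsto_atTop_zero
  simpa [Real.sqrt_sq (hf.2 _)] using hsq

theorem isClosed_K₂ : IsClosed K₂ := by
  have hev : ∀ i, Continuous fun f : ℓ² => (f i : ℝ) := fun i =>
    (continuous_apply i).comp lp.uniformContinuous_coe.continuous
  simp only [K₂, ConvexNat, Set.ofPred_and, Set.ofPred_forall]
  exact (isClosed_iInter fun i => isClosed_le continuous_const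
    (((hev (i + 2)).sub (continuous_const.mul (hev (i + 1)))).add (hev i))).inter
    (isClosed_iInter fun i => isClosed_le continuous_const (hev i))

theorem convex_K₂ : Convex ℝ K₂ := by
  intro f hf g hg a b ha hb _
  refine ⟨fun i => ?_, fun i => ?_⟩ <;>
    simp only [lp.coeFn_add, lp.coeFn_smul, Pi.add_apply, Pi.smul_apply, smul_eq_mul]
  · nlinarith [hf.1 i, hg.1 i]
  · nlinarith [hf.2 i, hg.2 i]

theorem zero_mem_K₂ : (0 : ℓ²) ∈ K₂ := ⟨fun i => by simp, fun i => by simp⟩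

def tentLp (n : ℕ) : ℓ² :=
  ⟨tent n, memℓp_two_of_support_finite <| (Set.finite_Iic n).subset fun i hi => by
    by_contra h
    exact hi (tent_eq_zero (not_le.1 h))⟩

theorem coe_tentLp (n : ℕ) : ⇑(tentLp n) = tent n := rfl

theorem inner_tentLp (f : ℓ²) (n : ℕ) :
    ⟪f, tentLp n⟫_ℝ = cumsum (cumsum f) n := by
  rw [lp.inner_eq_tsum_mul, ← sum_tent_mul, tsum_eq_sum fun i hi => ?_]
  · exact sum_congr rfl fun i _ => mul_comm _ _
  · simp only [mem_range, not_lt] at hi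
    simp [coe_tentLp, tent_eq_zero (by omega : n < i)]

theorem add_tentLp_mem_K₂ {f : ℓ²} (hf : f ∈ K₂) (n : ℕ) : f + tentLp n ∈ K₂ := by
  refine ⟨fun i => ?_, fun i => ?_⟩ <;> simp only [lp.coeFn_add, Pi.add_apply, coe_tentLp]
  · linarith [hf.1 i, convexNat_tent n i]
  · linarith [hf.2 i, tent_nonneg n i]

theorem sub_secondDiff_smul_tentLp_mem_K₂ {f : ℓ²} (hf : f ∈ K₂) (n : ℕ) :
    f - (f (n + 2) - 2 * f (n + 1) + f n) • tentLp n ∈ K₂ := by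
  set c := f (n + 2) - 2 * f (n + 1) + f n
  have hK := memK_of_mem_K₂ hf
  refine ⟨fun i => ?_, fun i => ?_⟩ <;>
    simp only [lp.coeFn_sub, lp.coeFn_smul, Pi.sub_apply, Pi.smul_apply, smul_eq_mul, coe_tentLp]
  · rw [show ∀ a b d x y z : ℝ, a - c * x - 2 * (b - c * y) + (d - c * z)
        = (a - 2 * b + d) - c * (x - 2 * y + z) by intros; ring, tent_secondDiff]
    split_ifs with h
    · subst h; simp [c]
    · simpa using hf.1 i
  · nlinarith [hK.tent_mul_le n i, hK.secondDiff_le n, hf.1 n, tent_nonneg n i]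

section Projection

variable {u v : ℓ²}

theorem inner_sub_tentLp (n : ℕ) : ⟪u - v, tentLp n⟫_ℝ = -cumsum (cumsum (v - u)) n := by
  rw [← neg_sub, inner_neg_left, inner_tentLp, lp.coeFn_sub]

theorem cumsum_cumsum_nonneg_of_inner_le_zero (hv : v ∈ K₂)
    (hvar : ∀ w ∈ K₂, ⟪u - v, w - v⟫_ℝ ≤ 0) (n : ℕ) : 0 ≤ cumsum (cumsum (v - u)) n := by
  have := hvar _ (add_tentLp_mem_K₂ hv n)
  rw [add_sub_cancel_left, inner_sub_tentLp] at this
  linarith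

theorem cumsum_cumsum_eq_zero_of_inner_le_zero (hv : v ∈ K₂)
    (hvar : ∀ w ∈ K₂, ⟪u - v, w - v⟫_ℝ ≤ 0) {n : ℕ} (hn : 0 < v (n + 2) - 2 * v (n + 1) + v n) :
    cumsum (cumsum (v - u)) n = 0 := by
  have := hvar _ (sub_secondDiff_smul_tentLp_mem_K₂ hv n)
  rw [sub_sub_cancel_left, inner_neg_right, real_inner_smul_right, inner_sub_tentLp] at this
  have hle : cumsum (cumsum (v - u)) n ≤ 0 := by nlinarith
  exact le_antisymm hle (cumsum_cumsum_nonneg_of_inner_le_zero hv hvar n)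

end Projection

/-- Theorem 1: existence and uniqueness of the constrained LSE `p̂`, which minimizes
`Q` both over `𝒞` and over square-summable elements of `𝒦`, has finite support, and
the maximum `ŝ` of its support satisfies `ŝ ≥ s̃`. -/
theorem stmt_0 (ptil : ℕ → ℝ) (hptil : IsFinPMF ptil)
    (stil : ℕ) (hstil : IsMaxSupport ptil stil) :
    ∃! phat : ℕ → ℝ,
      MemC phat ∧
      Summable (fun i => (phat i) ^ 2) ∧
      (∀ p : ℕ → ℝ, MemC p → Crit ptil phat ≤ Crit ptil p) ∧
      (∀ p : ℕ → ℝ, MemK p → Summable (fun i => (p i) ^ 2) →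
        Crit ptil phat ≤ Crit ptil p) ∧
      (Function.support phat).Finite ∧
      ∃ shat : ℕ, IsMaxSupport phat shat ∧ stil ≤ shat := by
  obtain ⟨hp0, hpfin, hp1⟩ := hptil
  set U : ℓ² := ⟨ptil, memℓp_two_of_support_finite hpfin⟩
  obtain ⟨V, hVK, hVmin⟩ := exists_norm_eq_iInf_of_complete_convex ⟨0, zero_mem_K₂⟩
    isClosed_K₂.isComplete convex_K₂ U
  have hvar := (norm_eq_iInf_iff_real_inner_le_zero convex_K₂ hVK).1 hVmin
  obtain ⟨shat, hshat, hle, hsum⟩ := exists_isMaxSupport_of_knot_conditions hp0 hstil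
    (hstil.tsum_eq_cumsum ▸ hp1) (memK_of_mem_K₂ hVK)
    (cumsum_cumsum_nonneg_of_inner_le_zero hVK hvar)
    (fun _ => cumsum_cumsum_eq_zero_of_inner_le_zero hVK hvar)
  have hmin : ∀ p : ℕ → ℝ, MemK p → Summable (fun i => p i ^ 2) → Crit ptil V ≤ Crit ptil p :=
    fun p hp hsq => (crit_le_crit_iff U V ⟨p, memℓp_two_iff_summable_sq.2 hsq⟩).2 <| hVmin ▸
      ciInf_le ⟨0, fun _ ⟨_, h⟩ => h ▸ norm_nonneg _⟩ (⟨_, hp.1, hp.2.1⟩ : K₂)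
  refine ⟨V, ⟨⟨memK_of_mem_K₂ hVK, hshat.tsum_eq_cumsum.trans hsum⟩, lp.summable_sq V,
    fun p hp => hmin p hp.1 hp.summable_sq, hmin, hshat.support_finite, shat, hshat, hle⟩, ?_⟩
  rintro q ⟨hq, hqsq, -, hqmin, -⟩
  have hqV := (crit_le_crit_iff U ⟨q, memℓp_two_iff_summable_sq.2 hqsq⟩ V).1
    (hqmin V (memK_of_mem_K₂ hVK) (lp.summable_sq V))
  exact congrArg (⇑)
    (eq_of_norm_sub_le_of_norm_sub_eq_iInf convex_K₂ hVK ⟨hq.1.1, hq.1.2.1⟩ hVmin hqV)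
end
end

section
/- Let p̃ be a probability mass function on ℕ with finite support and let p̂ be the constrained least squares estimator, i.e., the unique minimizer of Q over 𝒦. Then for every q ∈ 𝒦 with ∑_{j≥0} q(j)² < ∞ (in particular for every convex probability mass function q on ℕ), one has ∑_{j≥0} (q(j) − p̂(j))² ≤ ∑_{j≥0} (q(j) − p̃(j))², and the inequality is strict whenever p̃ is non-convex (i.e., p̃(l+1) − 2 p̃(l) + p̃(l−1) < 0 for some l ≥ 1). -/
open scoped BigOperators

noncomputable section

/-!
In `ℓ²` the criterion is `Q(f) = ½‖f - p̃‖² - ½‖p̃‖²`, so `p̂` is the metric projection of `p̃`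
onto the convex set `𝒦 ∩ ℓ²`. The obtuse-angle characterisation of such projections,
`⟪p̃ - p̂, q - p̂⟫ ≤ 0`, turns the cosine rule into
`‖q - p̂‖² + ‖p̂ - p̃‖² ≤ ‖q - p̃‖²`, and `p̂ ≠ p̃` as soon as `p̃` is not convex.
-/

open scoped lp RealInnerProductSpace

theorem norm_sub_sq_add_norm_sub_sq_le_of_isMinOn {F : Type*} [NormedAddCommGroup F]
    [InnerProductSpace ℝ F] {K : Set F} (hK : Convex ℝ K) {u v w : F} (hv : v ∈ K)
    (hmin : IsMinOn (fun x => ‖x - u‖) K v) (hw : w ∈ K) :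
    ‖w - v‖ ^ 2 + ‖v - u‖ ^ 2 ≤ ‖w - u‖ ^ 2 := by
  have : Nonempty K := ⟨⟨v, hv⟩⟩
  have hinf : ‖u - v‖ = ⨅ x : K, ‖u - x‖ := by
    refine le_antisymm (le_ciInf fun x => ?_)
      (ciInf_le ⟨0, Set.forall_mem_range.2 fun _ => norm_nonneg _⟩ (⟨v, hv⟩ : K))
    simpa only [norm_sub_rev u] using isMinOn_iff.1 hmin x x.2
  have hobtuse : ⟪u - v, w - v⟫ ≤ 0 := (norm_eq_iInf_iff_real_inner_le_zero hK hv).1 hinf w hw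
  calc ‖w - v‖ ^ 2 + ‖v - u‖ ^ 2 ≤ ‖w - v‖ ^ 2 - 2 * ⟪u - v, w - v⟫ + ‖v - u‖ ^ 2 := by linarith
    _ = ‖w - v + (v - u)‖ ^ 2 := by
      rw [norm_add_sq_real, real_inner_comm, ← neg_sub v u, inner_neg_right]; ring
    _ = ‖w - u‖ ^ 2 := by rw [sub_add_sub_cancel]

theorem memℓp_two_of_summable_sq {ι : Type*} {f : ι → ℝ} (hf : Summable fun i => f i ^ 2) :
    Memℓp f 2 :=
  memℓp_gen (by simpa using hf)

namespace lp

variable {ι : Type*}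

theorem real_inner_eq_tsum (f g : ℓ²(ι, ℝ)) : ⟪f, g⟫ = ∑' i, f i * g i := by
  simp [lp.inner_eq_tsum, mul_comm]

theorem summable_sq_s2 (f : ℓ²(ι, ℝ)) : Summable fun i => f i ^ 2 := by
  simpa [Real.inner_apply, sq] using lp.summable_inner (𝕜 := ℝ) f f

theorem norm_sq_eq_tsum_sq (f : ℓ²(ι, ℝ)) : ‖f‖ ^ 2 = ∑' i, f i ^ 2 := by
  rw [← real_inner_self_eq_norm_sq, real_inner_eq_tsum]
  simp only [sq]

end lp

theorem convex_setOf_memK : Convex ℝ {f : ℕ → ℝ | MemK f} := by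
  rintro f ⟨hfc, hf0, hflim⟩ g ⟨hgc, hg0, hglim⟩ a b ha hb -
  refine ⟨fun i => ?_, fun i => ?_, ?_⟩
  · simp only [Pi.add_apply, Pi.smul_apply, smul_eq_mul]
    nlinarith [mul_nonneg ha (hfc i), mul_nonneg hb (hgc i)]
  · simp only [Pi.add_apply, Pi.smul_apply, smul_eq_mul]
    exact add_nonneg (mul_nonneg ha (hf0 i)) (mul_nonneg hb (hg0 i))
  · show Filter.Tendsto (fun i => a • f i + b • g i) _ _
    simpa using (hflim.const_smul a).add (hglim.const_smul b)

theorem crit_eq_norm_sub_sq (p f : ℓ²(ℕ, ℝ)) : Crit p f = (‖f - p‖ ^ 2 - ‖p‖ ^ 2) / 2 := by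
  rw [Crit, ← lp.norm_sq_eq_tsum_sq, ← lp.real_inner_eq_tsum, norm_sub_sq_real]
  ring

theorem norm_sub_le_norm_sub_of_crit_le {p f g : ℓ²(ℕ, ℝ)} (h : Crit p f ≤ Crit p g) :
    ‖f - p‖ ≤ ‖g - p‖ := by
  rw [crit_eq_norm_sub_sq, crit_eq_norm_sub_sq] at h
  exact (pow_le_pow_iff_left₀ (norm_nonneg _) (norm_nonneg _) two_ne_zero).1 (by linarith)

/-- Theorem 2 (first part): the constrained LSE `p̂` is at least as close to any
square-summable `q ∈ 𝒦` as the empirical `p̃` is, strictly if `p̃` is non-convex. -/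
theorem stmt_2 (ptil : ℕ → ℝ) (hptil : IsFinPMF ptil)
    (phat : ℕ → ℝ) (hphatK : MemK phat)
    (hphat2 : Summable (fun i => (phat i) ^ 2))
    (hmin : ∀ f : ℕ → ℝ, MemK f → Summable (fun i => (f i) ^ 2) →
      Crit ptil phat ≤ Crit ptil f) :
    ∀ q : ℕ → ℝ, MemK q → Summable (fun j => (q j) ^ 2) →
      (∑' j, (q j - phat j) ^ 2 ≤ ∑' j, (q j - ptil j) ^ 2) ∧
      ((∃ l : ℕ, ptil (l + 2) - 2 * ptil (l + 1) + ptil l < 0) →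
        ∑' j, (q j - phat j) ^ 2 < ∑' j, (q j - ptil j) ^ 2) := by
  intro q hqK hq2
  have hptil2 : Summable fun i => ptil i ^ 2 :=
    summable_of_hasFiniteSupport <| show Set.Finite _ by simpa using hptil.2.1
  let P : ℓ²(ℕ, ℝ) := ⟨ptil, memℓp_two_of_summable_sq hptil2⟩
  let Phat : ℓ²(ℕ, ℝ) := ⟨phat, memℓp_two_of_summable_sq hphat2⟩
  let Q : ℓ²(ℕ, ℝ) := ⟨q, memℓp_two_of_summable_sq hq2⟩
  have hK : Convex ℝ {f : ℓ²(ℕ, ℝ) | MemK f} :=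
    convex_setOf_memK.is_linear_preimage ⟨lp.coeFn_add, lp.coeFn_smul⟩
  have hproj : IsMinOn (fun f => ‖f - P‖) {f : ℓ²(ℕ, ℝ) | MemK f} Phat :=
    isMinOn_iff.2 fun f hf =>
      norm_sub_le_norm_sub_of_crit_le (p := P) (f := Phat) (hmin f hf (lp.summable_sq_s2 f))
  have hpyth : ∑' j, (q j - phat j) ^ 2 + ‖Phat - P‖ ^ 2 ≤ ∑' j, (q j - ptil j) ^ 2 := by
    have h := norm_sub_sq_add_norm_sub_sq_le_of_isMinOn hK (v := Phat) hphatK hproj (w := Q) hqK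
    rwa [lp.norm_sq_eq_tsum_sq (Q - Phat), lp.norm_sq_eq_tsum_sq (Q - P)] at h
  refine ⟨by linarith [sq_nonneg ‖Phat - P‖], ?_⟩
  rintro ⟨l, hl⟩
  have hne : Phat ≠ P := fun h => by
    have := hphatK.1 l
    rw [show phat = ptil from congrArg Subtype.val h] at this
    linarith
  linarith [pow_pos (norm_pos_iff.2 (sub_ne_zero.2 hne)) 2]
end
end

section
/- Let p̃ be a probability mass function on ℕ with finite support and p̂ the constrained least squares estimator. Then the two distributions have the same mean: ∑_{i≥1} i · p̃(i) = ∑_{i≥1} i · p̂(i). -/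
open scoped BigOperators

noncomputable section

/-!
Write `d = p̂ - p̃` and `T s = ∑ᵢ d i * (s - i)₊` (`hingeSum d s`): this is the derivative of `Q`
at `p̂` in the direction of the hinge function `(s - ·)₊ ∈ 𝒦`. Minimality of `p̂` gives `T ≥ 0`,
and `T (j + 1) = 0` at every knot `j` of `p̂` (a point where `p̂ j > 0` and the second difference
of `p̂` is positive), because there one may also move `p̂` in the opposite direction. The second
difference of `T` at `s` is `d (s + 1)`. If `p̂` were positive everywhere it would have infinitely
many knots, while beyond the support of `p̃` the sequence `T` is strictly convex and nonnegative,
hence positive two steps after any zero. So `p̂` has finite support; `T` vanishes at its last knot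
and is concave from there on, so it vanishes from there on. Beyond both supports,
`∑_{i ≤ s} i * d i = s * T (s + 1) - (s + 1) * T s = 0`.
-/

open Filter Topology Finset

def secondDiff (f : ℕ → ℝ) (i : ℕ) : ℝ := f (i + 2) - 2 * f (i + 1) + f i

lemma convexNat_iff_secondDiff {f : ℕ → ℝ} : ConvexNat f ↔ ∀ i, 0 ≤ secondDiff f i := Iff.rfl

lemma secondDiff_add_mul (f g : ℕ → ℝ) (t : ℝ) (i : ℕ) :
    secondDiff (fun j => f j + t * g j) i = secondDiff f i + t * secondDiff g i := by
  simp only [secondDiff]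
  ring

lemma eq_zero_of_secondDiff_nonpos {u : ℕ → ℝ} (hu : ∀ s, 0 ≤ u s) {a : ℕ} (ha : u (a + 1) = 0)
    (hconc : ∀ s, a ≤ s → secondDiff u s ≤ 0) : ∀ s, a + 1 ≤ s → u s = 0 := by
  have key : ∀ s, a ≤ s → u (s + 1) = 0 := by
    refine Nat.le_induction ha fun s hs ih => le_antisymm ?_ (hu _)
    have := hconc s hs
    simp only [secondDiff, ih] at this
    linarith [hu s]
  intro s hs
  obtain ⟨s, rfl⟩ : ∃ r, s = r + 1 := ⟨s - 1, by omega⟩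
  exact key s (by omega)

lemma pos_of_secondDiff_pos {u : ℕ → ℝ} (hu : ∀ s, 0 ≤ u s) {a : ℕ} (ha : u a = 0)
    (hconv : ∀ s, a ≤ s → 0 < secondDiff u s) : ∀ s, a + 2 ≤ s → 0 < u s := by
  have key : ∀ s, a ≤ s → u (s + 1) < u (s + 2) := by
    refine Nat.le_induction ?_ fun s hs ih => ?_
    · have := hconv a le_rfl
      simp only [secondDiff, ha] at this
      linarith [hu (a + 1)]
    · have := hconv (s + 1) (by omega)
      simp only [secondDiff] at this
      linarith
  intro s hs
  obtain ⟨s, rfl⟩ : ∃ r, s = r + 2 := ⟨s - 2, by omega⟩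
  linarith [key s (by omega), hu (s + 1)]

def hinge (s i : ℕ) : ℝ := max ((s : ℝ) - i) 0

lemma hinge_of_le {s i : ℕ} (h : i ≤ s) : hinge s i = s - i :=
  max_eq_left (sub_nonneg.2 (by exact_mod_cast h))

lemma hinge_of_ge {s i : ℕ} (h : s ≤ i) : hinge s i = 0 :=
  max_eq_right (sub_nonpos.2 (by exact_mod_cast h))

lemma hinge_nonneg (s i : ℕ) : 0 ≤ hinge s i := le_max_right _ _

lemma hinge_le (s i : ℕ) : hinge s i ≤ s :=
  max_le (by linarith [(i.cast_nonneg : (0 : ℝ) ≤ i)]) s.cast_nonneg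

lemma secondDiff_hinge (j i : ℕ) : secondDiff (hinge (j + 1)) i = if i = j then 1 else 0 := by
  rcases lt_trichotomy i j with h | rfl | h
  · rw [if_neg h.ne, secondDiff, hinge_of_le (by omega), hinge_of_le (by omega),
      hinge_of_le (by omega)]
    push_cast
    ring
  · rw [if_pos rfl, secondDiff, hinge_of_ge (by omega), hinge_of_ge (by omega),
      hinge_of_le (by omega)]
    push_cast
    ring
  · rw [if_neg h.ne', secondDiff, hinge_of_ge (by omega), hinge_of_ge (by omega),
      hinge_of_ge (by omega)]
    ring

lemma tendsto_hinge (s : ℕ) : Tendsto (hinge s) atTop (𝓝 0) :=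
  tendsto_const_nhds.congr' ((eventually_ge_atTop s).mono fun _ hi => (hinge_of_ge hi).symm)

lemma memK_hinge (s : ℕ) : MemK (hinge s) := by
  refine ⟨convexNat_iff_secondDiff.2 fun i => ?_, hinge_nonneg s, tendsto_hinge s⟩
  cases s with
  | zero => simp [secondDiff, hinge_of_ge]
  | succ j =>
    rw [secondDiff_hinge]
    split_ifs <;> norm_num

namespace MemK

variable {f : ℕ → ℝ}

lemma antitone_s6 (hf : MemK f) : Antitone f := by
  have hdiff : Monotone fun i => f (i + 1) - f i :=
    monotone_nat_of_le_succ fun i => by linarith [hf.1 i]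
  refine antitone_nat_of_succ_le fun n => ?_
  by_contra! hlt
  have hgrow : ∀ i, n + 1 ≤ i → f (n + 1) ≤ f i :=
    Nat.le_induction le_rfl fun i hi ih => by linarith [hdiff (show n ≤ i by omega)]
  have : f (n + 1) ≤ 0 := ge_of_tendsto hf.2.2 (eventually_atTop.2 ⟨n + 1, hgrow⟩)
  linarith [hf.2.1 n]

lemma add_mul {g : ℕ → ℝ} (hf : MemK f) (hg : MemK g) {t : ℝ} (ht : 0 ≤ t) :
    MemK fun i => f i + t * g i := by
  refine ⟨convexNat_iff_secondDiff.2 fun i => ?_,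
    fun i => add_nonneg (hf.2.1 i) (mul_nonneg ht (hg.2.1 i)), ?_⟩
  · rw [secondDiff_add_mul]
    exact add_nonneg (hf.1 i) (mul_nonneg ht (hg.1 i))
  · simpa using hf.2.2.add (hg.2.2.const_mul t)

lemma sub_mul_hinge (hf : MemK f) {t : ℝ} (ht : 0 ≤ t) {j : ℕ} (hj : t * (j + 1) ≤ f j)
    (hknot : t ≤ secondDiff f j) : MemK fun i => f i - t * hinge (j + 1) i := by
  refine ⟨convexNat_iff_secondDiff.2 fun i => ?_, fun i => ?_, ?_⟩
  · have e : secondDiff (fun i => f i - t * hinge (j + 1) i) i =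
        secondDiff f i - t * secondDiff (hinge (j + 1)) i := by
      simp only [secondDiff]
      ring
    rw [e, secondDiff_hinge]
    split_ifs with hij
    · subst hij
      linarith
    · rw [mul_zero, sub_zero]
      exact hf.1 i
  · dsimp only
    rcases le_or_gt i j with hij | hij
    · have hle : t * hinge (j + 1) i ≤ t * (j + 1) := by
        have := hinge_le (j + 1) i
        push_cast at this
        exact mul_le_mul_of_nonneg_left this ht
      linarith [hf.antitone_s6 hij]
    · rw [hinge_of_ge (by omega), mul_zero, sub_zero]
      exact hf.2.1 i
  · simpa using hf.2.2.sub ((tendsto_hinge _).const_mul t)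

lemma exists_secondDiff_pos (hf : MemK f) {N : ℕ} (hN : 0 < f N) :
    ∃ j, N ≤ j ∧ 0 < secondDiff f j := by
  by_contra! hflat
  have hinc : ∀ j, N ≤ j → f (j + 1) - f j = f (N + 1) - f N :=
    Nat.le_induction rfl fun j hj ih => by
      have := le_antisymm (hflat j hj) (hf.1 j)
      simp only [secondDiff] at this
      linarith
  have hstep : f (N + 1) - f N = 0 := by
    have hlim : Tendsto (fun j => f (j + 1) - f j) atTop (𝓝 (0 - 0)) :=
      ((tendsto_add_atTop_iff_nat 1).2 hf.2.2).sub hf.2.2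
    rw [sub_zero] at hlim
    exact (tendsto_nhds_unique (hlim.congr' (eventually_atTop.2 ⟨N, hinc⟩))
      tendsto_const_nhds).symm
  have hconst : ∀ j, N ≤ j → f j = f N :=
    Nat.le_induction rfl fun j hj ih => by linarith [hinc j hj]
  have : f N = 0 := tendsto_nhds_unique
    (tendsto_const_nhds.congr' (eventually_atTop.2 ⟨N, fun j hj => (hconst j hj).symm⟩)) hf.2.2
  linarith

end MemK

def hingeSum (d : ℕ → ℝ) (s : ℕ) : ℝ := ∑ i ∈ range s, d i * hinge s i

lemma hingeSum_eq (d : ℕ → ℝ) (s : ℕ) : hingeSum d s = ∑ i ∈ range s, ((s : ℝ) - i) * d i :=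
  sum_congr rfl fun i hi => by rw [hinge_of_le (mem_range.1 hi).le, mul_comm]

lemma hingeSum_succ (d : ℕ → ℝ) (s : ℕ) :
    hingeSum d (s + 1) = hingeSum d s + ∑ i ∈ range (s + 1), d i := by
  rw [hingeSum_eq, hingeSum_eq, sum_range_succ, sum_range_succ, Nat.cast_succ,
    sum_congr rfl fun i _ => (show ((s : ℝ) + 1 - i) * d i = (s - i) * d i + d i by ring),
    sum_add_distrib]
  ring

lemma secondDiff_hingeSum (d : ℕ → ℝ) (s : ℕ) : secondDiff (hingeSum d) s = d (s + 1) := by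
  rw [secondDiff, hingeSum_succ d (s + 1), hingeSum_succ d s, sum_range_succ d (s + 1)]
  ring

lemma sum_range_succ_mul_eq_hingeSum (d : ℕ → ℝ) (s : ℕ) :
    ∑ i ∈ range (s + 1), (i : ℝ) * d i = s * hingeSum d (s + 1) - (s + 1) * hingeSum d s := by
  induction s with
  | zero => simp [hingeSum]
  | succ s ih =>
    rw [sum_range_succ (fun i => (i : ℝ) * d i), ih, hingeSum_succ d (s + 1), hingeSum_succ d s,
      sum_range_succ d (s + 1)]
    push_cast
    ring

lemma summable_sq_add_mul {f g : ℕ → ℝ} (hf : Summable fun i => f i ^ 2) {N : ℕ}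
    (hg : ∀ i, N ≤ i → g i = 0) (t : ℝ) : Summable fun i => (f i + t * g i) ^ 2 := by
  have hfin : Summable fun i => 2 * t * (f i * g i) + t ^ 2 * g i ^ 2 :=
    summable_of_ne_finset_zero (s := range N) fun i hi => by
      simp [hg i (by simpa using hi)]
  exact (hf.add hfin).congr fun i => by ring

lemma crit_add_mul {ptil f g : ℕ → ℝ} {m N : ℕ} (hptil : ∀ i, m ≤ i → ptil i = 0)
    (hf : Summable fun i => f i ^ 2) (hg : ∀ i, N ≤ i → g i = 0) (t : ℝ) :
    Crit ptil (fun i => f i + t * g i) = Crit ptil f + t * ∑ i ∈ range N, (f i - ptil i) * g i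
      + t ^ 2 / 2 * ∑ i ∈ range N, g i ^ 2 := by
  have hg' : ∀ i ∉ range N, g i = 0 := fun i hi => hg i (by simpa using hi)
  have hsq : ∑' i, (f i + t * g i) ^ 2 = ∑' i, f i ^ 2
      + (2 * t * ∑ i ∈ range N, f i * g i + t ^ 2 * ∑ i ∈ range N, g i ^ 2) := by
    have hfin : ∀ i ∉ range N, 2 * t * (f i * g i) + t ^ 2 * g i ^ 2 = 0 := fun i hi => by
      simp [hg' i hi]
    calc ∑' i, (f i + t * g i) ^ 2
        = ∑' i, (f i ^ 2 + (2 * t * (f i * g i) + t ^ 2 * g i ^ 2)) := tsum_congr fun i => by ring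
      _ = _ := by
        rw [hf.tsum_add (summable_of_ne_finset_zero hfin), tsum_eq_sum hfin, sum_add_distrib,
          mul_sum, mul_sum]
  have hlin : ∑' i, (f i + t * g i) * ptil i
      = ∑' i, f i * ptil i + t * ∑ i ∈ range N, ptil i * g i := by
    have hfin : ∀ i ∉ range N, t * (ptil i * g i) = 0 := fun i hi => by simp [hg' i hi]
    have hfp : Summable fun i => f i * ptil i :=
      summable_of_ne_finset_zero (s := range m) fun i hi => by
        simp [hptil i (by simpa using hi)]
    calc ∑' i, (f i + t * g i) * ptil i
        = ∑' i, (f i * ptil i + t * (ptil i * g i)) := tsum_congr fun i => by ring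
      _ = _ := by
        rw [hfp.tsum_add (summable_of_ne_finset_zero hfin), tsum_eq_sum hfin, mul_sum]
  simp only [Crit, hsq, hlin, sub_mul, sum_sub_distrib]
  ring

lemma nonneg_of_forall_mul_add_sq_mul_nonneg {E G ε : ℝ} (hε : 0 < ε)
    (h : ∀ t, 0 < t → t ≤ ε → 0 ≤ t * E + t ^ 2 * G) : 0 ≤ E := by
  have hlim : Tendsto (fun t => E + t * G) (𝓝[>] 0) (𝓝 E) := by
    have hcont : Continuous fun t : ℝ => E + t * G := by fun_prop
    simpa using (hcont.tendsto 0).mono_left nhdsWithin_le_nhds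
  refine ge_of_tendsto hlim ?_
  filter_upwards [Ioc_mem_nhdsGT hε] with t ⟨ht, htε⟩
  have := h t ht htε
  exact nonneg_of_mul_nonneg_right (by nlinarith) ht

def IsConvexLSE (ptil phat : ℕ → ℝ) : Prop :=
  MemK phat ∧ Summable (fun i => phat i ^ 2) ∧
    ∀ f : ℕ → ℝ, MemK f → Summable (fun i => f i ^ 2) → Crit ptil phat ≤ Crit ptil f

namespace IsConvexLSE

variable {ptil phat : ℕ → ℝ} {m : ℕ}

lemma sum_mul_nonneg (h : IsConvexLSE ptil phat) (hptil : ∀ i, m ≤ i → ptil i = 0)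
    {g : ℕ → ℝ} {N : ℕ} (hg : ∀ i, N ≤ i → g i = 0) {ε : ℝ} (hε : 0 < ε)
    (hfeas : ∀ t, 0 < t → t ≤ ε → MemK fun i => phat i + t * g i) :
    0 ≤ ∑ i ∈ range N, (phat i - ptil i) * g i := by
  refine nonneg_of_forall_mul_add_sq_mul_nonneg hε (G := (∑ i ∈ range N, g i ^ 2) / 2)
    fun t ht htε => ?_
  have := h.2.2 _ (hfeas t ht htε) (summable_sq_add_mul h.2.1 hg t)
  rw [crit_add_mul hptil h.2.1 hg] at this
  linarith

lemma hingeSum_nonneg (h : IsConvexLSE ptil phat) (hptil : ∀ i, m ≤ i → ptil i = 0) (s : ℕ) :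
    0 ≤ hingeSum (fun i => phat i - ptil i) s :=
  h.sum_mul_nonneg hptil (fun _ hi => hinge_of_ge hi) one_pos
    fun _ ht _ => h.1.add_mul (memK_hinge s) ht.le

lemma hingeSum_eq_zero_of_secondDiff_pos (h : IsConvexLSE ptil phat)
    (hptil : ∀ i, m ≤ i → ptil i = 0) {j : ℕ} (hpos : 0 < phat j)
    (hknot : 0 < secondDiff phat j) : hingeSum (fun i => phat i - ptil i) (j + 1) = 0 := by
  refine le_antisymm ?_ (h.hingeSum_nonneg hptil _)
  have hj : (0 : ℝ) < j + 1 := by positivity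
  have := h.sum_mul_nonneg hptil (g := fun i => -hinge (j + 1) i) (N := j + 1)
    (fun i hi => by simp [hinge_of_ge hi]) (lt_min (div_pos hpos hj) hknot)
    fun t ht htε => by
      simp only [mul_neg, ← sub_eq_add_neg]
      exact h.1.sub_mul_hinge ht.le ((le_div_iff₀ hj).1 (htε.trans (min_le_left _ _)))
        (htε.trans (min_le_right _ _))
  simp only [mul_neg, sum_neg_distrib, neg_nonneg] at this
  exact this

lemma exists_eq_zero (h : IsConvexLSE ptil phat) (hptil : ∀ i, m ≤ i → ptil i = 0) :
    ∃ a, phat a = 0 := by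
  by_contra! hne
  have hpos : ∀ i, 0 < phat i := fun i => (h.1.2.1 i).lt_of_ne (hne i).symm
  obtain ⟨j, hjm, hj⟩ := h.1.exists_secondDiff_pos (hpos m)
  obtain ⟨k, hjk, hk⟩ := h.1.exists_secondDiff_pos (hpos (j + 2))
  have hconv : ∀ s, j + 1 ≤ s → 0 < secondDiff (hingeSum fun i => phat i - ptil i) s :=
    fun s hs => by
      rw [secondDiff_hingeSum, hptil (s + 1) (by omega), sub_zero]
      exact hpos _
  have := pos_of_secondDiff_pos (h.hingeSum_nonneg hptil)
    (h.hingeSum_eq_zero_of_secondDiff_pos hptil (hpos j) hj) hconv (k + 1) (by omega)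
  rw [h.hingeSum_eq_zero_of_secondDiff_pos hptil (hpos k) hk] at this
  exact this.false

lemma exists_hingeSum_eq_zero (h : IsConvexLSE ptil phat) (hptil : ∀ i, m ≤ i → ptil i = 0)
    (hptil_nonneg : ∀ i, 0 ≤ ptil i) {a : ℕ} (ha : phat a = 0) :
    ∃ k, hingeSum (fun i => phat i - ptil i) (k + 1) = 0 ∧ ∀ i, k < i → phat i = 0 := by
  have hvanish : ∀ {a}, phat a = 0 → ∀ i, a ≤ i → phat i = 0 := fun ha i hi =>
    le_antisymm (ha ▸ h.1.antitone_s6 hi) (h.1.2.1 i)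
  induction a with
  | zero =>
    refine ⟨0, le_antisymm ?_ (h.hingeSum_nonneg hptil 1), fun i _ => hvanish ha i i.zero_le⟩
    simp [hingeSum, hinge, ha, hptil_nonneg 0]
  | succ k ih =>
    by_cases hk : phat k = 0
    · exact ih hk
    · refine ⟨k, h.hingeSum_eq_zero_of_secondDiff_pos hptil ((h.1.2.1 k).lt_of_ne' hk) ?_,
        fun i hi => hvanish ha i hi⟩
      rw [secondDiff, ha, hvanish ha (k + 2) (by omega)]
      linarith [(h.1.2.1 k).lt_of_ne' hk]

end IsConvexLSE

/-- Theorem 3 (means): the empirical distribution `p̃` and the constrained LSE `p̂`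
have the same mean. -/
theorem stmt_6 (ptil : ℕ → ℝ) (hptil : IsFinPMF ptil)
    (phat : ℕ → ℝ) (hphatK : MemK phat)
    (hphat2 : Summable (fun i => (phat i) ^ 2))
    (hmin : ∀ f : ℕ → ℝ, MemK f → Summable (fun i => (f i) ^ 2) →
      Crit ptil phat ≤ Crit ptil f) :
    ∑' i : ℕ, (i : ℝ) * ptil i = ∑' i : ℕ, (i : ℝ) * phat i := by
  obtain ⟨hptil_nonneg, hptil_fin, -⟩ := hptil
  obtain ⟨b, hb⟩ := hptil_fin.bddAbove
  have hptil_zero : ∀ i, b + 1 ≤ i → ptil i = 0 := fun i hi => by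
    by_contra hne
    linarith [hb (Function.mem_support.2 hne)]
  have h : IsConvexLSE ptil phat := ⟨hphatK, hphat2, hmin⟩
  obtain ⟨a, ha⟩ := h.exists_eq_zero hptil_zero
  obtain ⟨k, hTk, hphat_zero⟩ := h.exists_hingeSum_eq_zero hptil_zero hptil_nonneg ha
  have hT : ∀ s, k + 1 ≤ s → hingeSum (fun i => phat i - ptil i) s = 0 :=
    eq_zero_of_secondDiff_nonpos (h.hingeSum_nonneg hptil_zero) hTk fun s hs => by
      rw [secondDiff_hingeSum, hphat_zero (s + 1) (by omega), zero_sub, neg_nonpos]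
      exact hptil_nonneg _
  set n := max k b + 1
  have hmoment := sum_range_succ_mul_eq_hingeSum (fun i => phat i - ptil i) n
  rw [hT n (by omega), hT (n + 1) (by omega), mul_zero, mul_zero, sub_zero] at hmoment
  simp only [mul_sub, sum_sub_distrib, sub_eq_zero] at hmoment
  rw [tsum_eq_sum (s := range (n + 1)), tsum_eq_sum (s := range (n + 1)), hmoment]
  all_goals
    intro i hi
    simp only [mem_range, not_lt] at hi
  · rw [hphat_zero i (by omega), mul_zero]
  · rw [hptil_zero i (by omega), mul_zero]
end
end

section
/- Let p̃ be a probability mass function on ℕ with finite support and p̂ the constrained least squares estimator. Then p̂(0) ≥ p̃(0). -/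
/-!
Raising `p̂(0)` by `ε ≥ 0` keeps `p̂` in `𝒦`, since it only increases the second difference
at `1`, and changes `Q` by `ε (p̂(0) - p̃(0)) + ε² / 2`. If `p̂(0) < p̃(0)`, the choice
`ε = p̃(0) - p̂(0)` lowers `Q` by `ε² / 2`, contradicting minimality.
-/

open scoped BigOperators

noncomputable section

namespace ConvexNat

theorem add {f g : ℕ → ℝ} (hf : ConvexNat f) (hg : ConvexNat g) : ConvexNat (f + g) :=
  fun i => by simp only [Pi.add_apply]; linarith [hf i, hg i]

theorem single_zero {ε : ℝ} (hε : 0 ≤ ε) : ConvexNat (Pi.single 0 ε) := by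
  rintro (_ | i) <;> simp [hε]

end ConvexNat

namespace MemK

theorem add {f g : ℕ → ℝ} (hf : MemK f) (hg : MemK g) : MemK (f + g) :=
  ⟨hf.1.add hg.1, fun i => add_nonneg (hf.2.1 i) (hg.2.1 i), by
    rw [← add_zero (0 : ℝ)]; exact hf.2.2.add hg.2.2⟩

theorem single_zero {ε : ℝ} (hε : 0 ≤ ε) : MemK (Pi.single 0 ε) := by
  refine ⟨ConvexNat.single_zero hε, fun i => ?_, tendsto_const_nhds.congr' ?_⟩
  · rcases eq_or_ne i 0 with rfl | hi <;> simp [*]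
  · filter_upwards [Filter.eventually_ne_atTop 0] with i hi
    simp [hi]

end MemK

section single

variable {f p : ℕ → ℝ} (j : ℕ) (ε : ℝ)

theorem HasSum.sq_add_single {a : ℝ} (h : HasSum (fun i => f i ^ 2) a) :
    HasSum (fun i => (f i + (Pi.single j ε : ℕ → ℝ) i) ^ 2) (a + (2 * ε * f j + ε ^ 2)) := by
  convert h.add (hasSum_pi_single j (2 * ε * f j + ε ^ 2)) using 1
  funext i
  rcases eq_or_ne i j with rfl | hi
  · simp only [Pi.single_eq_same]; ring
  · simp [hi]

theorem HasSum.add_single_mul {b : ℝ} (h : HasSum (fun i => f i * p i) b) :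
    HasSum (fun i => (f i + (Pi.single j ε : ℕ → ℝ) i) * p i) (b + ε * p j) := by
  convert h.add (hasSum_pi_single j (ε * p j)) using 1
  funext i
  rcases eq_or_ne i j with rfl | hi
  · simp only [Pi.single_eq_same]; ring
  · simp [hi]

theorem crit_add_single (hf2 : Summable fun i => f i ^ 2) (hfp : Summable fun i => f i * p i) :
    Crit p (f + Pi.single j ε) = Crit p f + ε * (f j - p j) + ε ^ 2 / 2 := by
  simp only [Crit, Pi.add_apply]
  rw [(hf2.hasSum.sq_add_single j ε).tsum_eq, (hfp.hasSum.add_single_mul j ε).tsum_eq]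
  ring

end single

/-- Theorem 3 (mass at zero): `p̂(0) ≥ p̃(0)`. -/
theorem stmt_7 (ptil : ℕ → ℝ) (hptil : IsFinPMF ptil)
    (phat : ℕ → ℝ) (hphatK : MemK phat)
    (hphat2 : Summable (fun i => (phat i) ^ 2))
    (hmin : ∀ f : ℕ → ℝ, MemK f → Summable (fun i => (f i) ^ 2) →
      Crit ptil phat ≤ Crit ptil f) :
    ptil 0 ≤ phat 0 := by
  by_contra! hlt
  set ε := ptil 0 - phat 0
  have hprod : Summable fun i => phat i * ptil i :=
    summable_of_hasFiniteSupport (Function.HasFiniteSupport.fun_mul_right phat hptil.2.1)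
  have hK : MemK (phat + (Pi.single 0 ε : ℕ → ℝ)) := hphatK.add (MemK.single_zero (by linarith))
  have hsq : Summable fun i => (phat + (Pi.single 0 ε : ℕ → ℝ)) i ^ 2 :=
    (hphat2.hasSum.sq_add_single 0 ε).summable
  have hQ := hmin _ hK hsq
  rw [crit_add_single 0 ε hphat2 hprod] at hQ
  nlinarith
end
end

section
/- Let f ∈ 𝒦 and suppose (π_j)_{j≥1} is a sequence of nonnegative reals satisfying f(i) = ∑_{j≥i+1} π_j T_j(i) for all i ≥ 0. Then π is uniquely determined by f, namely π_j = (j(j+1)/2) · (f(j+1) + f(j−1) − 2 f(j)) for all j ≥ 1. -/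
/-
Each triangle `T_k` is `2/(k(k+1))` times the hinge `i ↦ (k - i)⁺`, whose second difference is
the point mass at its kink `i = k`. Taking second differences termwise in
`f(i) = ∑ₖ πₖ T_k(i)` therefore isolates the single weight `π_j`.
-/

open scoped BigOperators

noncomputable section

/-- The triangular function `T_j(i) = 2(j−i)/(j(j+1))` for `i < j`, `0` otherwise. -/
def Tri (j i : ℕ) : ℝ :=
  if i < j then 2 * ((j : ℝ) - (i : ℝ)) / ((j : ℝ) * ((j : ℝ) + 1)) else 0

theorem tri_second_diff (k i : ℕ) :
    Tri k (i + 2) + Tri k i - 2 * Tri k (i + 1) =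
      if k = i + 1 then 2 / (((i : ℝ) + 1) * ((i : ℝ) + 2)) else 0 := by
  have hk : k < i + 1 ∨ k = i + 1 ∨ k = i + 2 ∨ i + 2 < k := by omega
  rcases hk with hk | rfl | rfl | hk
  · rw [Tri, Tri, Tri, if_neg (by omega), if_neg (by omega), if_neg (by omega),
      if_neg hk.ne]
    ring
  · rw [Tri, Tri, Tri, if_neg (by omega), if_pos (by omega), if_neg (by omega), if_pos rfl]
    push_cast
    ring
  · rw [Tri, Tri, Tri, if_neg (by omega), if_pos (by omega), if_pos (by omega),
      if_neg (by omega)]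
    push_cast
    field_simp
    ring
  · have : (0 : ℝ) < k := by exact_mod_cast (by omega : 0 < k)
    rw [Tri, Tri, Tri, if_pos hk, if_pos (by omega), if_pos (by omega), if_neg (by omega)]
    field_simp
    push_cast
    ring

theorem second_diff_of_eq_tsum_mul_tri {f π : ℕ → ℝ}
    (hsummable : ∀ i, Summable fun k => π k * Tri k i)
    (hmix : ∀ i, f i = ∑' k, π k * Tri k i) (i : ℕ) :
    f (i + 2) + f i - 2 * f (i + 1) = π (i + 1) * (2 / (((i : ℝ) + 1) * ((i : ℝ) + 2))) := by
  calc f (i + 2) + f i - 2 * f (i + 1)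
      = ∑' k, π k * (Tri k (i + 2) + Tri k i - 2 * Tri k (i + 1)) := by
        rw [hmix, hmix, hmix, ← (hsummable _).tsum_add (hsummable _), ← tsum_mul_left,
          ← ((hsummable _).add (hsummable _)).tsum_sub ((hsummable _).mul_left 2)]
        congr 1 with k
        ring
    _ = π (i + 1) * (2 / (((i : ℝ) + 1) * ((i : ℝ) + 2))) := by
        simp_rw [tri_second_diff, mul_ite, mul_zero]
        exact tsum_ite_eq (i + 1) _

theorem stmt_9_general (f : ℕ → ℝ)
    (π : ℕ → ℝ)
    (hsummable : ∀ i : ℕ, Summable (fun j => π j * Tri j i))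
    (hmix : ∀ i : ℕ, f i = ∑' j : ℕ, π j * Tri j i) :
    ∀ j : ℕ, 1 ≤ j →
      π j = ((j : ℝ) * ((j : ℝ) + 1) / 2) * (f (j + 1) + f (j - 1) - 2 * f j) := by
  intro j hj
  obtain ⟨i, rfl⟩ : ∃ i, j = i + 1 := ⟨j - 1, by omega⟩
  rw [Nat.add_sub_cancel, add_assoc, one_add_one_eq_two,
    second_diff_of_eq_tsum_mul_tri hsummable hmix i]
  push_cast
  field_simp
  ring

/-- Theorem 4 (2): the mixing weights of `f ∈ 𝒦` are uniquely determined: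
`π_j = (j(j+1)/2)(f(j+1) + f(j−1) − 2 f(j))` for all `j ≥ 1`. -/
theorem stmt_9 (f : ℕ → ℝ) (hf : MemK f)
    (π : ℕ → ℝ) (hπ : ∀ j, 0 ≤ π j)
    (hsummable : ∀ i : ℕ, Summable (fun j => π j * Tri j i))
    (hmix : ∀ i : ℕ, f i = ∑' j : ℕ, π j * Tri j i) :
    ∀ j : ℕ, 1 ≤ j →
      π j = ((j : ℝ) * ((j : ℝ) + 1) / 2) * (f (j + 1) + f (j - 1) - 2 * f j) :=
  stmt_9_general f π hsummable hmix
end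
end

section
/- Let p̃ be a probability mass function on ℕ with finite support and s̃ the maximum of its support, and let L ≥ s̃ + 1. For π ∈ ℳ^L, π minimizes Ψ over ℳ^L if and only if d_j(Ψ)(π) ≥ 0 for all 1 ≤ j ≤ L and d_j(Ψ)(π) = 0 for every j in the support of π (i.e., every j with π_j > 0). -/
open scoped BigOperators

noncomputable section

/-- The mixture criterion
`Ψ(π) = (1/2) ∑_i (∑_{j≥i+1} π_j T_j(i))² − ∑_i p̃(i) ∑_{j≥i+1} π_j T_j(i)`
(recall `T_j(i) = 0` for `j ≤ i`). -/
def Psi (ptil : ℕ → ℝ) (π : ℕ → ℝ) : ℝ :=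
  (1 / 2) * ∑' i : ℕ, (∑' j : ℕ, π j * Tri j i) ^ 2 -
    ∑' i : ℕ, ptil i * ∑' j : ℕ, π j * Tri j i

/-- The directional derivative of `Ψ` at `μ` in the direction of the Dirac mass `δ_j`:
`d_j(Ψ)(μ) = ∑_{l=0}^{j−1} T_j(l) (∑_{j'≥l+1} μ_{j'} T_{j'}(l) − p̃(l))`. -/
def dPsi (ptil : ℕ → ℝ) (j : ℕ) (μ : ℕ → ℝ) : ℝ :=
  ∑ l ∈ Finset.range j, Tri j l * ((∑' j' : ℕ, μ j' * Tri j' l) - ptil l)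

/-- `ℳ^L`: nonnegative measures on `ℕ∖{0}` supported in `{1,…,L}`. -/
def MemML (L : ℕ) (π : ℕ → ℝ) : Prop :=
  π 0 = 0 ∧ (∀ j, 0 ≤ π j) ∧ ∀ j : ℕ, L < j → π j = 0

/-!
`Ψ` is a convex quadratic function of the weights:
`Ψ(π + ν) - Ψ(π) = ∑_j ν_j d_j(Ψ)(π) + (1/2) ∑_i (∑_j ν_j T_j(i))²`.
Dropping the square shows that the first-order conditions are sufficient on the cone `ℳ^L`.
Conversely, moving mass `t` onto `δ_j` changes `Ψ` by `t d_j + t² c_j` with `c_j > 0`; small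
`t > 0` is always admissible, and small `t < 0` is admissible when `π_j > 0`, which forces
`d_j ≥ 0`, resp. `d_j = 0`.
-/

open Finset

lemma Tri_of_le {j i : ℕ} (h : j ≤ i) : Tri j i = 0 := by
  simp [Tri, Nat.not_lt.mpr h]

lemma Tri_zero_pos {j : ℕ} (hj : 0 < j) : 0 < Tri j 0 := by
  have : (0 : ℝ) < j := by exact_mod_cast hj
  rw [Tri, if_pos hj]
  push_cast
  positivity

lemma dPsi_zero (ptil π : ℕ → ℝ) : dPsi ptil 0 π = 0 := by
  simp [dPsi]

lemma nonneg_of_forall_mul_add_sq_mul_nonneg_s16 {a c d : ℝ} (ha : 0 < a) (hc : 0 < c)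
    (h : ∀ t, 0 < t → t ≤ a → 0 ≤ t * d + t ^ 2 * c) : 0 ≤ d := by
  refine le_of_forall_pos_le_add fun ε hε => ?_
  set t := min a (ε / c)
  have ht : 0 < t := lt_min ha (div_pos hε hc)
  have htc : t * c ≤ ε := (le_div_iff₀ hc).1 (min_le_right _ _)
  have hq := h t ht (min_le_left _ _)
  have : 0 ≤ d + t * c := nonneg_of_mul_nonneg_right (by linarith) ht
  linarith

def triMixture (π : ℕ → ℝ) (i : ℕ) : ℝ := ∑' j, π j * Tri j i

lemma triMixture_single (j : ℕ) (t : ℝ) (i : ℕ) : triMixture (Pi.single j t) i = t * Tri j i :=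
  (tsum_eq_single j fun k hk => by simp [hk]).trans (by simp)

section SupportedIn

variable {L : ℕ} {π ν : ℕ → ℝ}

lemma triMixture_eq_sum (hπ : ∀ j, L < j → π j = 0) (i : ℕ) :
    triMixture π i = ∑ j ∈ range (L + 1), π j * Tri j i :=
  tsum_eq_sum fun j hj => by rw [hπ j (by simpa using hj), zero_mul]

lemma triMixture_eq_zero (hπ : ∀ j, L < j → π j = 0) {i : ℕ} (hi : L ≤ i) :
    triMixture π i = 0 := by
  rw [triMixture_eq_sum hπ]
  exact sum_eq_zero fun j hj => by rw [Tri_of_le (by simp at hj; omega), mul_zero]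

lemma triMixture_add (hπ : ∀ j, L < j → π j = 0) (hν : ∀ j, L < j → ν j = 0) (i : ℕ) :
    triMixture (π + ν) i = triMixture π i + triMixture ν i := by
  have hπν : ∀ j, L < j → (π + ν) j = 0 := fun j hj => by simp [hπ j hj, hν j hj]
  simp only [triMixture_eq_sum hπν, triMixture_eq_sum hπ, triMixture_eq_sum hν, Pi.add_apply,
    add_mul, sum_add_distrib]

lemma Psi_eq_sum (ptil : ℕ → ℝ) (hπ : ∀ j, L < j → π j = 0) :
    Psi ptil π = ∑ i ∈ range L, (triMixture π i ^ 2 / 2 - ptil i * triMixture π i) := by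
  have hzero : ∀ i ∉ range L, triMixture π i = 0 := fun i hi =>
    triMixture_eq_zero hπ (by simpa using hi)
  change (1 / 2) * ∑' i, triMixture π i ^ 2 - ∑' i, ptil i * triMixture π i = _
  rw [tsum_eq_sum (s := range L) fun i hi => by simp [hzero i hi],
    tsum_eq_sum (s := range L) fun i hi => by simp [hzero i hi], mul_sum, ← sum_sub_distrib]
  exact sum_congr rfl fun _ _ => by ring

lemma sum_mul_dPsi (ptil : ℕ → ℝ) (hν : ∀ j, L < j → ν j = 0) :
    ∑ j ∈ range (L + 1), ν j * dPsi ptil j π =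
      ∑ i ∈ range L, triMixture ν i * (triMixture π i - ptil i) := by
  have hdPsi : ∀ j ∈ range (L + 1),
      dPsi ptil j π = ∑ l ∈ range L, Tri j l * (triMixture π l - ptil l) := fun j hj =>
    sum_subset (range_subset_range.2 (by simpa [Nat.lt_succ_iff] using hj)) fun l _ hl => by
      rw [Tri_of_le (by simpa using hl), zero_mul]
  rw [sum_congr rfl fun j hj => by rw [hdPsi j hj, mul_sum], sum_comm]
  refine sum_congr rfl fun l _ => ?_
  rw [triMixture_eq_sum hν, sum_mul]
  exact sum_congr rfl fun _ _ => by ring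

lemma Psi_add_sub_Psi (ptil : ℕ → ℝ) (hπ : ∀ j, L < j → π j = 0) (hν : ∀ j, L < j → ν j = 0) :
    Psi ptil (π + ν) - Psi ptil π =
      ∑ j ∈ range (L + 1), ν j * dPsi ptil j π + (∑ i ∈ range L, triMixture ν i ^ 2) / 2 := by
  have hπν : ∀ j, L < j → (π + ν) j = 0 := fun j hj => by simp [hπ j hj, hν j hj]
  rw [Psi_eq_sum ptil hπν, Psi_eq_sum ptil hπ, sum_mul_dPsi ptil hν, sum_div,
    ← sum_sub_distrib, ← sum_add_distrib]
  exact sum_congr rfl fun i _ => by rw [triMixture_add hπ hν]; ring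

lemma Psi_add_single_sub_Psi (ptil : ℕ → ℝ) (hπ : ∀ j, L < j → π j = 0) {j : ℕ} (hjL : j ≤ L)
    (t : ℝ) :
    Psi ptil (π + Pi.single j t) - Psi ptil π =
      t * dPsi ptil j π + t ^ 2 * ((∑ i ∈ range L, Tri j i ^ 2) / 2) := by
  have hsingle : ∀ k, L < k → (Pi.single j t : ℕ → ℝ) k = 0 := fun k hk =>
    Pi.single_eq_of_ne (by omega : k ≠ j) _
  rw [Psi_add_sub_Psi ptil hπ hsingle, sum_eq_single_of_mem j (by simpa [Nat.lt_succ_iff])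
    fun k _ hk => by rw [Pi.single_eq_of_ne hk, zero_mul]]
  simp only [Pi.single_eq_same, triMixture_single, mul_pow, ← mul_sum, mul_div_assoc]

lemma sum_range_Tri_sq_pos {j : ℕ} (hj1 : 1 ≤ j) (hjL : j ≤ L) :
    0 < ∑ i ∈ range L, Tri j i ^ 2 :=
  lt_of_lt_of_le (pow_pos (Tri_zero_pos hj1) 2)
    (single_le_sum (fun i _ => sq_nonneg (Tri j i)) (mem_range.2 (by omega)))

lemma MemML.add_single (hπ : MemML L π) {j : ℕ} (hj1 : 1 ≤ j) (hjL : j ≤ L) {t : ℝ}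
    (ht : 0 ≤ π j + t) : MemML L (π + Pi.single j t) := by
  obtain ⟨h0, hnn, hsup⟩ := hπ
  refine ⟨by simp [h0, Pi.single_eq_of_ne (by omega : (0 : ℕ) ≠ j)], fun k => ?_,
    fun k hk => by simp [hsup k hk, Pi.single_eq_of_ne (by omega : k ≠ j)]⟩
  by_cases hk : k = j
  · subst hk; simpa using ht
  · simpa [Pi.single_eq_of_ne hk] using hnn k

lemma dPsi_nonneg_of_isMin {ptil : ℕ → ℝ} (hπ : MemML L π)
    (hmin : ∀ μ, MemML L μ → Psi ptil π ≤ Psi ptil μ) {j : ℕ} (hj1 : 1 ≤ j) (hjL : j ≤ L) :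
    0 ≤ dPsi ptil j π := by
  refine nonneg_of_forall_mul_add_sq_mul_nonneg_s16 one_pos
    (half_pos (sum_range_Tri_sq_pos hj1 hjL)) fun t ht _ => ?_
  rw [← Psi_add_single_sub_Psi ptil hπ.2.2 hjL]
  exact sub_nonneg.2 (hmin _ (hπ.add_single hj1 hjL (by linarith [hπ.2.1 j])))

lemma dPsi_nonpos_of_isMin {ptil : ℕ → ℝ} (hπ : MemML L π)
    (hmin : ∀ μ, MemML L μ → Psi ptil π ≤ Psi ptil μ) {j : ℕ} (hj1 : 1 ≤ j) (hjL : j ≤ L)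
    (hπj : π j ≠ 0) : dPsi ptil j π ≤ 0 := by
  have hpos : 0 < π j := lt_of_le_of_ne (hπ.2.1 j) (Ne.symm hπj)
  refine neg_nonneg.1 <| nonneg_of_forall_mul_add_sq_mul_nonneg_s16 hpos
    (half_pos (sum_range_Tri_sq_pos hj1 hjL)) fun t _ hta => ?_
  have hstep := Psi_add_single_sub_Psi ptil hπ.2.2 hjL (-t)
  have hle := hmin _ (hπ.add_single hj1 hjL (t := -t) (by linarith))
  nlinarith

lemma Psi_le_of_dPsi_nonneg (ptil : ℕ → ℝ) (hπ : ∀ j, L < j → π j = 0) {μ : ℕ → ℝ} (hμ : MemML L μ)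
    (hge : ∀ j, 1 ≤ j → j ≤ L → 0 ≤ dPsi ptil j π)
    (heq : ∀ j, 1 ≤ j → j ≤ L → π j ≠ 0 → dPsi ptil j π = 0) :
    Psi ptil π ≤ Psi ptil μ := by
  have hdiff : ∀ j, L < j → (μ - π) j = 0 := fun j hj => by simp [hμ.2.2 j hj, hπ j hj]
  have key := Psi_add_sub_Psi ptil hπ hdiff
  rw [add_sub_cancel] at key
  have hlin : 0 ≤ ∑ j ∈ range (L + 1), (μ - π) j * dPsi ptil j π := by
    refine sum_nonneg fun j hj => ?_
    have hjL : j ≤ L := by simpa [Nat.lt_succ_iff] using hj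
    rcases Nat.eq_zero_or_pos j with rfl | hj1
    · rw [dPsi_zero, mul_zero]
    by_cases hπj : π j = 0
    · simpa [hπj] using mul_nonneg (hμ.2.1 j) (hge j hj1 hjL)
    · rw [heq j hj1 hjL hπj, mul_zero]
  have hquad : 0 ≤ ∑ i ∈ range L, triMixture (μ - π) i ^ 2 := sum_nonneg fun _ _ => sq_nonneg _
  linarith

end SupportedIn

theorem stmt_16_general (ptil : ℕ → ℝ)
    (L : ℕ)
    (π : ℕ → ℝ) (hπ : MemML L π) :
    (∀ μ : ℕ → ℝ, MemML L μ → Psi ptil π ≤ Psi ptil μ) ↔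
      ((∀ j : ℕ, 1 ≤ j → j ≤ L → 0 ≤ dPsi ptil j π) ∧
       (∀ j : ℕ, 1 ≤ j → j ≤ L → π j ≠ 0 → dPsi ptil j π = 0)) := by
  constructor
  · intro hmin
    exact ⟨fun j hj1 hjL => dPsi_nonneg_of_isMin hπ hmin hj1 hjL, fun j hj1 hjL hπj =>
      le_antisymm (dPsi_nonpos_of_isMin hπ hmin hj1 hjL hπj) (dPsi_nonneg_of_isMin hπ hmin hj1 hjL)⟩
  · rintro ⟨hge, heq⟩ μ hμ
    exact Psi_le_of_dPsi_nonneg ptil hπ.2.2 hμ hge heq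

/-- Lemma 12: for `L ≥ s̃ + 1` and `π ∈ ℳ^L`, `π` minimizes `Ψ` over `ℳ^L` iff
`d_j(Ψ)(π) ≥ 0` for all `1 ≤ j ≤ L` and `d_j(Ψ)(π) = 0` for all `j` in the support
of `π`. -/
theorem stmt_16 (ptil : ℕ → ℝ) (hptil : IsFinPMF ptil)
    (stil : ℕ) (hstil : IsMaxSupport ptil stil)
    (L : ℕ) (hL : stil + 1 ≤ L)
    (π : ℕ → ℝ) (hπ : MemML L π) :
    (∀ μ : ℕ → ℝ, MemML L μ → Psi ptil π ≤ Psi ptil μ) ↔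
      ((∀ j : ℕ, 1 ≤ j → j ≤ L → 0 ≤ dPsi ptil j π) ∧
       (∀ j : ℕ, 1 ≤ j → j ≤ L → π j ≠ 0 → dPsi ptil j π = 0)) :=
  stmt_16_general ptil L π hπ
end
end
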